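/- arXiv:2001.01869 — 2 statements merged into one kernel-verified Lean document; each statement's English description precedes it below -/
import Mathlib

section
/- Let R ∈ SO(3), t ∈ ℝ³, and let p̄ₛ, p̄ₜ ∈ ℝ³ with v̄ = p̄ₜ − p̄ₛ. Suppose p̂ₛ, p̂ₜ ∈ ℝ³ and λₛ, λₜ > 0 satisfy λₛ·p̂ₛ = R·p̄ₛ + t and λₜ·p̂ₜ = R·p̄ₜ + t, and set v̂ = p̂ₜ − p̂ₛ. Then v̂ × (R·p̄ₜ + t) + p̂ₛ × (R·v̄) = 0. -/
open Matrix

theorem edge_constraint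
    (R : Matrix (Fin 3) (Fin 3) ℝ)
    (hR : R ∈ Matrix.specialOrthogonalGroup (Fin 3) ℝ)
    (t pbar_s pbar_t phat_s phat_t : Fin 3 → ℝ)
    (lam_s lam_t : ℝ) (hlam_s : 0 < lam_s) (hlam_t : 0 < lam_t)
    (hs : lam_s • phat_s = R.mulVec pbar_s + t)
    (ht : lam_t • phat_t = R.mulVec pbar_t + t)
    (vbar vhat : Fin 3 → ℝ)
    (hvbar : vbar = pbar_t - pbar_s)
    (hvhat : vhat = phat_t - phat_s) :
    crossProduct vhat (R.mulVec pbar_t + t) + crossProduct phat_s (R.mulVec vbar) = 0 := by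
  subst hvbar hvhat
  have h1 : R.mulVec pbar_t + t = lam_t • phat_t := ht.symm
  have h2 : R.mulVec (pbar_t - pbar_s) = lam_t • phat_t - lam_s • phat_s := by
    rw [Matrix.mulVec_sub]
    have hs' : R.mulVec pbar_s = lam_s • phat_s - t := by rw [hs]; abel
    have ht' : R.mulVec pbar_t = lam_t • phat_t - t := by rw [ht]; abel
    rw [hs', ht']; abel
  rw [h1, h2]
  funext i
  fin_cases i <;>
    simp [crossProduct, Pi.smul_apply, smul_eq_mul, Pi.sub_apply] <;> ring
end

section
/- Let R ∈ SO(3), t ∈ ℝ³, n̄ ∈ ℝ³ a unit vector, and p̄ₛ ∈ ℝ³. Let q̄₁ ∈ ℝ³ and q̄₂ = (I − 2·n̄·n̄ᵀ)·q̄₁ + 2·n̄·n̄ᵀ·p̄ₛ be a reflection-symmetry correspondence. Suppose λ₁·q̂₁ = R·q̄₁ + t and λ₂·q̂₂ = R·q̄₂ + t with λ₁, λ₂ > 0, and suppose n̄ᵀ(p̄ₛ − q̄₁) ≠ 0. Then (q̂₁ × q̂₂)ᵀ · (R·n̄) = 0. -/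
open Matrix

theorem symmetry_constraint
    (R : Matrix (Fin 3) (Fin 3) ℝ)
    (hR : R ∈ Matrix.specialOrthogonalGroup (Fin 3) ℝ)
    (t nbar pbar_s qbar1 qbar2 qhat1 qhat2 : Fin 3 → ℝ)
    (hunit : nbar ⬝ᵥ nbar = 1)
    (hq2 : qbar2 = ((1 : Matrix (Fin 3) (Fin 3) ℝ) - (2 : ℝ) • vecMulVec nbar nbar).mulVec qbar1
            + (2 : ℝ) • (vecMulVec nbar nbar).mulVec pbar_s)
    (lam1 lam2 : ℝ) (hlam1 : 0 < lam1) (hlam2 : 0 < lam2)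
    (h1 : lam1 • qhat1 = R.mulVec qbar1 + t)
    (h2 : lam2 • qhat2 = R.mulVec qbar2 + t)
    (hne : nbar ⬝ᵥ (pbar_s - qbar1) ≠ 0) :
    crossProduct qhat1 qhat2 ⬝ᵥ R.mulVec nbar = 0 := by
  set c : ℝ := 2 * (nbar ⬝ᵥ (pbar_s - qbar1)) with hc
  have hcne : c ≠ 0 := by
    rw [hc]; exact mul_ne_zero two_ne_zero hne
  have hdiff : qbar2 - qbar1 = c • nbar := by
    subst hq2
    funext i
    have hu := hunit
    simp only [dotProduct, Fin.sum_univ_three] at hu ⊢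
    simp only [Pi.sub_apply, Pi.add_apply, Pi.smul_apply, mulVec, dotProduct,
      Fin.sum_univ_three, Matrix.sub_apply, Matrix.smul_apply, Matrix.one_apply,
      vecMulVec_apply, smul_eq_mul, hc, dotProduct, Fin.sum_univ_three, Pi.sub_apply]
    fin_cases i <;> simp <;> nlinarith [hu]
  have key : c • R.mulVec nbar = lam2 • qhat2 - lam1 • qhat1 := by
    rw [h1, h2, ← mulVec_smul, ← hdiff, mulVec_sub]
    abel
  have hRn : R.mulVec nbar = c⁻¹ • (lam2 • qhat2 - lam1 • qhat1) := by
    rw [← key, smul_smul, inv_mul_cancel₀ hcne, one_smul]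
  rw [hRn]
  have h1' : crossProduct qhat1 qhat2 ⬝ᵥ qhat1 = 0 := by
    simp [crossProduct, dotProduct, Fin.sum_univ_three]; ring
  have h2' : crossProduct qhat1 qhat2 ⬝ᵥ qhat2 = 0 := by
    simp [crossProduct, dotProduct, Fin.sum_univ_three]; ring
  rw [dotProduct_smul, dotProduct_sub, dotProduct_smul, dotProduct_smul, h1', h2']
  simp
end
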